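/- In the polynomial ring F₀[X] with F₀ = ℚ(p, x₀, x₁, x₂, x₃) one has the identity P(X) = 1 − p²·(C + (p⁴+p²+1)·D)·X² + (p+1)·p⁴·A·D·X³ − p⁷·D·(C + (p⁴+p²+1)·D)·X⁴ + p^{15}·D³·X⁶. (This is the spherical-map form of the numerator E(X) in Shimura's conjecture for Sp₃: Ω applied to E(X) = 1 − p²(T₂(p²) + (p²−p+1)(p²+p+1)[p]₃)X² + (p+1)p⁴T(p)[p]₃X³ − p⁷[p]₃(T₂(p²) + (p²−p+1)(p²+p+1)[p]₃)X⁴ + p^{15}[p]₃³X⁶ yields P(X).) -/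
import Mathlib


/-! Common setup: the field `F₀ = ℚ(p, x₀, x₁, x₂, x₃)`, realized as the fraction field of the
polynomial ring `ℚ[p, x₀, x₁, x₂, x₃]`.  `p` has index `0`, `x₀` has index `1`, and `x i`
(for `i : Fin 3`) are the variables `x₁, x₂, x₃`. -/

noncomputable section

/-- The rational function field `ℚ(p, x₀, x₁, x₂, x₃)`. -/
abbrev F₀ : Type := FractionRing (MvPolynomial (Fin 5) ℚ)

/-- The indeterminate `p`. -/
def p : F₀ := algebraMap (MvPolynomial (Fin 5) ℚ) F₀ (MvPolynomial.X 0)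

/-- The indeterminate `x₀`. -/
def x₀ : F₀ := algebraMap (MvPolynomial (Fin 5) ℚ) F₀ (MvPolynomial.X 1)

/-- The indeterminates `x₁, x₂, x₃` (as `x 0, x 1, x 2`). -/
def x (i : Fin 3) : F₀ := algebraMap (MvPolynomial (Fin 5) ℚ) F₀ (MvPolynomial.X i.succ.succ)

/-- The monomial symmetric polynomial `sym_{a,b,c}` in `x₁, x₂, x₃`: the sum of all *distinct*
monomials obtained from `x₁^a x₂^b x₃^c` by permuting the variables. -/
def sym (a b c : ℕ) : F₀ :=
  ∑ e ∈ Finset.univ.image (fun σ : Equiv.Perm (Fin 3) => (![a, b, c]) ∘ σ),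
    ∏ j, x j ^ e j

/-- Andrianov's formula for the Satake spherical image `ω(λ,μ) = ω(t(1, p^λ, p^μ))`
of the `GL₃` Hecke operator `t(1, p^λ, p^μ)`, for `0 ≤ λ ≤ μ`. -/
def ω (l m : ℕ) : F₀ :=
  ((if l = 0 ∧ m = 0 then p ^ 3 / ((p + 1) * (p ^ 2 + p + 1))
    else if l = 0 ∨ l = m then p / (p + 1)
    else 1) / p ^ (2 * l + m)) *
  ∑ σ : Equiv.Perm (Fin 3),
    x (σ 1) ^ l * x (σ 2) ^ m *
      ((x (σ 1) - x (σ 0) / p) * (x (σ 2) - x (σ 0) / p) * (x (σ 2) - x (σ 1) / p)) /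
      ((x (σ 1) - x (σ 0)) * (x (σ 2) - x (σ 0)) * (x (σ 2) - x (σ 1)))

open Polynomial in
/-- `Ω(T(p))`, the spherical image of the Hecke operator `T(p)` for `Sp₃`. -/
def A : F₀ := x₀ * (1 + sym 1 0 0 + sym 1 1 0 + sym 1 1 1)

/-- `Ω(T₁(p²))`. -/
def B : F₀ := x₀ ^ 2 * (((p ^ 2 - 1) / p ^ 3) * (sym 2 1 1 + sym 1 1 0)
  + (1 / p) * (sym 2 2 1 + sym 2 1 0 + sym 1 0 0)
  + ((p - 1) * (3 * p ^ 2 + 2 * p + 1) / p ^ 4) * sym 1 1 1)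

/-- `Ω(T₂(p²))`. -/
def Cc : F₀ := x₀ ^ 2 * ((1 / p ^ 3) * (sym 1 1 0 + sym 2 1 1)
  + ((p - 1) * (p ^ 2 + p + 1) / p ^ 6) * sym 1 1 1)

/-- `Ω([p]₃)`. -/
def Dd : F₀ := x₀ ^ 2 * sym 1 1 1 / p ^ 6


lemma hp : p ≠ 0 := by
  simpa [p] using (map_ne_zero_iff _ (IsFractionRing.injective (MvPolynomial (Fin 5) ℚ) F₀)).2
    (MvPolynomial.X_ne_zero 0)

lemma sym100 : sym 1 0 0 = x 0 + x 1 + x 2 := by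
  rw [sym, show (Finset.univ.image (fun σ : Equiv.Perm (Fin 3) => (![1,0,0] : Fin 3 → ℕ) ∘ σ))
    = {![1,0,0], ![0,1,0], ![0,0,1]} from by decide,
    Finset.sum_insert (by decide), Finset.sum_insert (by decide), Finset.sum_singleton]
  simp [Fin.prod_univ_three]; ring

lemma sym110 : sym 1 1 0 = x 0 * x 1 + x 0 * x 2 + x 1 * x 2 := by
  rw [sym, show (Finset.univ.image (fun σ : Equiv.Perm (Fin 3) => (![1,1,0] : Fin 3 → ℕ) ∘ σ))
    = {![1,1,0], ![1,0,1], ![0,1,1]} from by decide,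
    Finset.sum_insert (by decide), Finset.sum_insert (by decide), Finset.sum_singleton]
  simp [Fin.prod_univ_three]; ring

lemma sym111 : sym 1 1 1 = x 0 * x 1 * x 2 := by
  rw [sym, show (Finset.univ.image (fun σ : Equiv.Perm (Fin 3) => (![1,1,1] : Fin 3 → ℕ) ∘ σ))
    = {![1,1,1]} from by decide, Finset.sum_singleton]
  simp [Fin.prod_univ_three]

lemma sym211 : sym 2 1 1 = x 0 ^ 2 * x 1 * x 2 + x 0 * x 1 ^ 2 * x 2 + x 0 * x 1 * x 2 ^ 2 := by
  rw [sym, show (Finset.univ.image (fun σ : Equiv.Perm (Fin 3) => (![2,1,1] : Fin 3 → ℕ) ∘ σ))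
    = {![2,1,1], ![1,2,1], ![1,1,2]} from by decide,
    Finset.sum_insert (by decide), Finset.sum_insert (by decide), Finset.sum_singleton]
  simp [Fin.prod_univ_three]; ring

lemma sym221 : sym 2 2 1
    = x 0 ^ 2 * x 1 ^ 2 * x 2 + x 0 ^ 2 * x 1 * x 2 ^ 2 + x 0 * x 1 ^ 2 * x 2 ^ 2 := by
  rw [sym, show (Finset.univ.image (fun σ : Equiv.Perm (Fin 3) => (![2,2,1] : Fin 3 → ℕ) ∘ σ))
    = {![2,2,1], ![2,1,2], ![1,2,2]} from by decide,
    Finset.sum_insert (by decide), Finset.sum_insert (by decide), Finset.sum_singleton]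
  simp [Fin.prod_univ_three]; ring

lemma sym222 : sym 2 2 2 = x 0 ^ 2 * x 1 ^ 2 * x 2 ^ 2 := by
  rw [sym, show (Finset.univ.image (fun σ : Equiv.Perm (Fin 3) => (![2,2,2] : Fin 3 → ℕ) ∘ σ))
    = {![2,2,2]} from by decide, Finset.sum_singleton]
  simp [Fin.prod_univ_three]

lemma sym322 : sym 3 2 2
    = x 0 ^ 3 * x 1 ^ 2 * x 2 ^ 2 + x 0 ^ 2 * x 1 ^ 3 * x 2 ^ 2 + x 0 ^ 2 * x 1 ^ 2 * x 2 ^ 3 := by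
  rw [sym, show (Finset.univ.image (fun σ : Equiv.Perm (Fin 3) => (![3,2,2] : Fin 3 → ℕ) ∘ σ))
    = {![3,2,2], ![2,3,2], ![2,2,3]} from by decide,
    Finset.sum_insert (by decide), Finset.sum_insert (by decide), Finset.sum_singleton]
  simp [Fin.prod_univ_three]; ring

lemma sym333 : sym 3 3 3 = x 0 ^ 3 * x 1 ^ 3 * x 2 ^ 3 := by
  rw [sym, show (Finset.univ.image (fun σ : Equiv.Perm (Fin 3) => (![3,3,3] : Fin 3 → ℕ) ∘ σ))
    = {![3,3,3]} from by decide, Finset.sum_singleton]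
  simp [Fin.prod_univ_three]

lemma coeff2 : (sym 2 1 1 / p + (p ^ 2 + p + 1) * sym 1 1 1 / p ^ 2 + sym 1 1 0 / p) * x₀ ^ 2
    = p ^ 2 * (Cc + (p ^ 4 + p ^ 2 + 1) * Dd) := by
  rw [Cc, Dd, sym211, sym111, sym110]
  field_simp [hp]
  ring

lemma coeff3 : ((p + 1) / p ^ 2) * (sym 2 2 2 + sym 2 2 1 + sym 2 1 1 + sym 1 1 1) * x₀ ^ 3
    = (p + 1) * p ^ 4 * A * Dd := by
  rw [A, Dd, sym222, sym221, sym211, sym111, sym110, sym100]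
  field_simp [hp]
  ring

lemma coeff4 : (sym 3 2 2 / p ^ 2 + (p ^ 2 + p + 1) * sym 2 2 2 / p ^ 3 + sym 2 2 1 / p ^ 2)
    * x₀ ^ 4 = p ^ 7 * Dd * (Cc + (p ^ 4 + p ^ 2 + 1) * Dd) := by
  rw [Cc, Dd, sym322, sym222, sym221, sym211, sym111, sym110]
  field_simp [hp]
  ring

lemma coeff6 : (sym 3 3 3 / p ^ 3) * x₀ ^ 6 = p ^ 15 * Dd ^ 3 := by
  rw [Dd, sym333, sym111]
  field_simp [hp]

open Polynomial in
/-- the spherical-map form of the numerator `E(X)` in Shimura's conjecture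
for `Sp₃`: `P(X) = Ω(E(X))` as polynomials in `F₀[X]`. -/
theorem P_eq_Omega_E :
    (1 - C ((sym 2 1 1 / p + (p ^ 2 + p + 1) * sym 1 1 1 / p ^ 2 + sym 1 1 0 / p)
          * x₀ ^ 2) * X ^ 2
      + C (((p + 1) / p ^ 2) * (sym 2 2 2 + sym 2 2 1 + sym 2 1 1 + sym 1 1 1)
          * x₀ ^ 3) * X ^ 3
      - C ((sym 3 2 2 / p ^ 2 + (p ^ 2 + p + 1) * sym 2 2 2 / p ^ 3 + sym 2 2 1 / p ^ 2)
          * x₀ ^ 4) * X ^ 4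
      + C ((sym 3 3 3 / p ^ 3) * x₀ ^ 6) * X ^ 6 : F₀[X])
    = 1 - C (p ^ 2 * (Cc + (p ^ 4 + p ^ 2 + 1) * Dd)) * X ^ 2
      + C ((p + 1) * p ^ 4 * A * Dd) * X ^ 3
      - C (p ^ 7 * Dd * (Cc + (p ^ 4 + p ^ 2 + 1) * Dd)) * X ^ 4
      + C (p ^ 15 * Dd ^ 3) * X ^ 6 := by
  rw [coeff2, coeff3, coeff4, coeff6]
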